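/- Let m ≥ 1 and let sX, sY, t : Fin m → ℕ be positive with Σ_i t i = Σ_i sX i + Σ_i sY i, and let L = 2m + 3mP + Σ_i t i with P = Σ_i t i + Σ_i sX i + Σ_i sY i. If the constructed two-machine open shop instance admits a feasible no-idle/no-wait schedule with makespan at most L + 1, then the NMTS instance (sX, sY, t) has a solution, i.e. there exist bijections α, β : Fin m ≃ Fin m with sX(α i) + sY(β i) = t i for all i. -/

import Mathlib

/-- M1 processing times of the constructed instance: x-jobs (`j < m`) and y-jobs
(`m ≤ j < 2m`) take time 1, the t-job of index `i` takes time `t i + 3P`. -/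
def osA (m : ℕ) (t : Fin m → ℕ) (P : ℕ) : Fin (3 * m) → ℕ := fun j =>
  if _ : (j : ℕ) < 2 * m then 1 else t ⟨(j : ℕ) - 2 * m, by omega⟩ + 3 * P

/-- M2 processing times of the constructed instance: the x-job of index `i` takes
time `sX i + P`, the y-job of index `i` takes `sY i + 2P`, t-jobs take time 2. -/
def osB (m : ℕ) (sX sY : Fin m → ℕ) (P : ℕ) : Fin (3 * m) → ℕ := fun j =>
  if h1 : (j : ℕ) < m then sX ⟨(j : ℕ), h1⟩ + P
  else if _ : (j : ℕ) < 2 * m then sY ⟨(j : ℕ) - m, by omega⟩ + 2 * P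
  else 2

/-- Start time of job `j` on a machine with processing times `c`, processing order
`π` and machine start time `s`: the machine works contiguously (no idle time). -/
def startTime (N : ℕ) (c : Fin N → ℕ) (π : Fin N ≃ Fin N) (s : ℕ) (j : Fin N) : ℕ :=
  s + ∑ l ∈ Finset.univ.filter (fun l : Fin N => l < π.symm j), c (π l)

/-- A no-idle/no-wait two-machine open shop schedule: each machine processes all jobs
contiguously in orders `π1`, `π2` from start times `s1`, `s2`, and for each job either
its M2 operation starts exactly when its M1 operation completes, or vice versa. -/
def OSSchedule (N : ℕ) (a b : Fin N → ℕ)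
    (π1 π2 : Fin N ≃ Fin N) (s1 s2 : ℕ) : Prop :=
  ∀ j : Fin N,
    startTime N b π2 s2 j = startTime N a π1 s1 j + a j ∨
    startTime N a π1 s1 j = startTime N b π2 s2 j + b j

/-! Each t-job occupies M1 for `t i + 3P` time units, and M2 has to stay busy meanwhile. A job
processed on M2 during that window has its own M1 operation outside it, so by the no-wait rule its
M2 operation touches an edge of the window. Every M2 operation being shorter than the window, the
window is covered on M2 by two jobs, one entering at its left edge and one leaving at its right
edge; these are x- or y-jobs, and distinct windows use distinct jobs. Both machine loads equal
`2m + 3mP + Σ t`, so summing over windows makes every window tight, and counting multiples of `P`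
shows that each window is covered by one x-job and one y-job whose sizes add up to `t i`. -/

open Finset

section Machine
variable {N : ℕ} (c : Fin N → ℕ) (π : Fin N ≃ Fin N) (s : ℕ)

theorem startTime_add_eq_sum_Iic (j : Fin N) :
    startTime N c π s j + c j = s + ∑ l ∈ Iic (π.symm j), c (π l) := by
  rw [startTime, filter_gt_eq_Iio, ← Iio_insert, sum_insert notMem_Iio_self,
    π.apply_symm_apply]
  ring

theorem startTime_add_le_of_lt {j j' : Fin N} (h : π.symm j < π.symm j') :
    startTime N c π s j + c j ≤ startTime N c π s j' := by
  rw [startTime_add_eq_sum_Iic, startTime, filter_gt_eq_Iio]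
  gcongr
  exact fun l hl => mem_Iio.mpr ((mem_Iic.mp hl).trans_lt h)

theorem startTime_add_le_sum (j : Fin N) :
    startTime N c π s j + c j ≤ s + ∑ j, c j := by
  rw [startTime_add_eq_sum_Iic, ← π.sum_comp c]
  gcongr
  exact subset_univ _

theorem startTime_disjoint {j j' : Fin N} (h : j ≠ j') :
    startTime N c π s j + c j ≤ startTime N c π s j' ∨
      startTime N c π s j' + c j' ≤ startTime N c π s j := by
  rcases lt_or_gt_of_ne (π.symm.injective.ne h) with hlt | hlt
  · exact .inl (startTime_add_le_of_lt c π s hlt)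
  · exact .inr (startTime_add_le_of_lt c π s hlt)

theorem eq_of_startTime_le_lt {τ : ℕ} {j j' : Fin N}
    (hj : startTime N c π s j ≤ τ ∧ τ < startTime N c π s j + c j)
    (hj' : startTime N c π s j' ≤ τ ∧ τ < startTime N c π s j' + c j') : j = j' := by
  by_contra hne
  rcases startTime_disjoint c π s hne with h | h <;> omega

theorem exists_startTime_le_lt {τ : ℕ} (h₁ : s ≤ τ) (h₂ : τ < s + ∑ j, c j) :
    ∃ j, startTime N c π s j ≤ τ ∧ τ < startTime N c π s j + c j := by
  suffices ∀ k ≤ N, τ < s + ∑ l ∈ univ.filter (fun l : Fin N => l.val < k), c (π l) →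
      ∃ j, startTime N c π s j ≤ τ ∧ τ < startTime N c π s j + c j from
    this N le_rfl (by simpa [← π.sum_comp c] using h₂)
  intro k
  induction k with
  | zero => intro _ h; simp at h; omega
  | succ k ih =>
    intro hk hτ
    by_cases hk' : τ < s + ∑ l ∈ univ.filter (fun l : Fin N => l.val < k), c (π l)
    · exact ih (by omega) hk'
    · have hIio : univ.filter (fun l : Fin N => l.val < k) = Iio ⟨k, hk⟩ := by
        ext l; simp [Fin.lt_def]
      have hIic : univ.filter (fun l : Fin N => l.val < k + 1) = Iic ⟨k, hk⟩ := by
        ext l; simp [Fin.le_def]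
      refine ⟨π ⟨k, hk⟩, ?_, ?_⟩
      · rw [startTime, filter_gt_eq_Iio, π.symm_apply_apply, ← hIio]
        omega
      · rw [startTime_add_eq_sum_Iic, π.symm_apply_apply, ← hIic]
        exact hτ

end Machine

section Flanking
variable {N : ℕ} {a b : Fin N → ℕ} {π1 π2 : Fin N ≃ Fin N} {s1 s2 : ℕ}

local notation "SA" => startTime N a π1 s1
local notation "SB" => startTime N b π2 s2

theorem OSSchedule.left_or_right_of_overlap (hS : OSSchedule N a b π1 π2 s1 s2) {T j : Fin N}
    {τ : ℕ} (hT : SA T ≤ τ ∧ τ < SA T + a T) (hj : SB j ≤ τ ∧ τ < SB j + b j) :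
    (SB j ≤ SA T ∧ SB j = SA j + a j) ∨ (SA T + a T ≤ SB j + b j ∧ SA j = SB j + b j) := by
  by_cases hjT : j = T
  · subst hjT
    rcases hS j with h | h <;> omega
  · rcases startTime_disjoint a π1 s1 hjT with h | h <;> rcases hS j with h' | h' <;> omega

/- `jL` and `jR` are the jobs processed on M2 at the second and the second-to-last time unit of
the M1 operation of `T`; any job processed on M2 in between would have to be one of them. -/
theorem OSSchedule.exists_flanking (hS : OSSchedule N a b π1 π2 s1 s2) (T : Fin N)
    (hshort : ∀ j, b j + 2 < a T) (hstart : s2 ≤ SA T + 1)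
    (hend : SA T + a T ≤ s2 + ∑ j, b j + 1) :
    ∃ jL jR, (SB jL ≤ SA T ∧ SA T < SB jL + b jL ∧ SB jL = SA jL + a jL) ∧
      (SB jR < SA T + a T ∧ SA T + a T ≤ SB jR + b jR ∧ SA jR = SB jR + b jR) ∧
      a T ≤ b jL + b jR := by
  have hcover : ∀ τ, SA T < τ → τ + 1 < SA T + a T → ∃ j, SB j ≤ τ ∧ τ < SB j + b j :=
    fun τ h₁ h₂ => exists_startTime_le_lt b π2 s2 (by omega) (by omega)
  have hT := hshort T
  obtain ⟨jL, hjL⟩ := hcover (SA T + 1) (by omega) (by omega)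
  obtain ⟨jR, hjR⟩ := hcover (SA T + a T - 2) (by omega) (by omega)
  have hL : SB jL ≤ SA T ∧ SB jL = SA jL + a jL := by
    have := hshort jL
    rcases hS.left_or_right_of_overlap (T := T) ⟨by omega, by omega⟩ hjL with h | h
    exacts [h, by omega]
  have hR : SA T + a T ≤ SB jR + b jR ∧ SA jR = SB jR + b jR := by
    have := hshort jR
    rcases hS.left_or_right_of_overlap (T := T) ⟨by omega, by omega⟩ hjR with h | h
    exacts [by omega, h]
  have hno_gap : SB jR ≤ SB jL + b jL := by
    by_contra! hgap
    obtain ⟨j, hj⟩ := hcover (SB jL + b jL) (by omega) (by omega)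
    rcases hS.left_or_right_of_overlap (T := T) ⟨by omega, by omega⟩ hj with h | h
    · obtain rfl := eq_of_startTime_le_lt b π2 s2 (j' := j) hjL ⟨by omega, by omega⟩
      omega
    · obtain rfl := eq_of_startTime_le_lt b π2 s2 (j' := j) hjR ⟨by omega, by omega⟩
      omega
  exact ⟨jL, jR, ⟨hL.1, by omega, hL.2⟩, ⟨by omega, hR⟩, by omega⟩

theorem injective_sum_elim_of_flanking {ι : Type*} {T jL jR : ι → Fin N}
    (hT : Function.Injective T) (hshort : ∀ i j, b j < a (T i))
    (hL : ∀ i, SB (jL i) ≤ SA (T i) ∧ SA (T i) < SB (jL i) + b (jL i) ∧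
      SB (jL i) = SA (jL i) + a (jL i))
    (hR : ∀ i, SB (jR i) < SA (T i) + a (T i) ∧ SA (T i) + a (T i) ≤ SB (jR i) + b (jR i) ∧
      SA (jR i) = SB (jR i) + b (jR i)) :
    Function.Injective (Sum.elim jL jR) := by
  rintro (i | i) (i' | i') h <;> simp only [Sum.elim_inl, Sum.elim_inr] at h
  · refine congrArg Sum.inl (by_contra fun hne => ?_)
    obtain ⟨h₁, h₂, -⟩ := hL i
    obtain ⟨h₃, h₄, -⟩ := hL i'
    rw [← h] at h₃ h₄
    have := hshort i (jL i); have := hshort i' (jL i)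
    rcases startTime_disjoint a π1 s1 (hT.ne hne) with h' | h' <;> omega
  · obtain ⟨h₁, h₂, h₃⟩ := hL i
    have h₄ := (hR i').2.2
    rw [← h] at h₄
    omega
  · obtain ⟨h₁, h₂, h₃⟩ := hL i'
    have h₄ := (hR i).2.2
    rw [h] at h₄
    omega
  · refine congrArg Sum.inr (by_contra fun hne => ?_)
    obtain ⟨h₁, h₂, -⟩ := hR i
    obtain ⟨h₃, h₄, -⟩ := hR i'
    rw [← h] at h₃ h₄
    have := hshort i (jR i); have := hshort i' (jR i)
    rcases startTime_disjoint a π1 s1 (hT.ne hne) with h' | h' <;> omega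

theorem OSSchedule.exists_injective_flanking (hS : OSSchedule N a b π1 π2 s1 s2)
    {ι : Type*} {T : ι → Fin N} (hT : Function.Injective T) (hshort : ∀ i j, b j + 2 < a (T i))
    (hstart : s2 ≤ s1 + 1) (hend : s1 + ∑ j, a j ≤ s2 + ∑ j, b j + 1) :
    ∃ G : ι ⊕ ι → Fin N, Function.Injective G ∧
      ∀ i, a (T i) ≤ b (G (.inl i)) + b (G (.inr i)) := by
  have hwin := fun i => hS.exists_flanking (T i) (hshort i)
    (by unfold startTime; omega) (by have := startTime_add_le_sum a π1 s1 (T i); omega)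
  choose jL jR hL hR hle using hwin
  exact ⟨Sum.elim jL jR,
    injective_sum_elim_of_flanking hT (fun i j => by have := hshort i j; omega) hL hR, hle⟩

end Flanking

/-- `.inl (.inl k)`, `.inl (.inr k)` and `.inr i` index the x-job of `k`, the y-job of `k` and the
t-job of `i`. -/
def nmtsJob (m : ℕ) : (Fin m ⊕ Fin m) ⊕ Fin m ≃ Fin (3 * m) :=
  ((finSumFinEquiv.sumCongr (Equiv.refl _)).trans finSumFinEquiv).trans (finCongr (by ring))

def xyLength {m : ℕ} (sX sY : Fin m → ℕ) (P : ℕ) : Fin m ⊕ Fin m → ℕ :=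
  Sum.elim (fun k => sX k + P) (fun k => sY k + 2 * P)

section Reduction
variable {m : ℕ} {sX sY t : Fin m → ℕ} {P : ℕ}

@[simp] theorem val_nmtsJob_inl_inl (k : Fin m) : (nmtsJob m (.inl (.inl k)) : ℕ) = k := by
  simp [nmtsJob]

@[simp] theorem val_nmtsJob_inl_inr (k : Fin m) : (nmtsJob m (.inl (.inr k)) : ℕ) = m + k := by
  simp [nmtsJob, add_comm]

@[simp] theorem val_nmtsJob_inr (i : Fin m) : (nmtsJob m (.inr i) : ℕ) = 2 * m + i := by
  simp [nmtsJob]; ring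

@[simp] theorem osA_nmtsJob_inl (p : Fin m ⊕ Fin m) : osA m t P (nmtsJob m (.inl p)) = 1 := by
  rcases p with k | k <;> simp [osA] <;> omega

@[simp] theorem osA_nmtsJob_inr (i : Fin m) : osA m t P (nmtsJob m (.inr i)) = t i + 3 * P := by
  simp [osA]

@[simp] theorem osB_nmtsJob_inl (p : Fin m ⊕ Fin m) :
    osB m sX sY P (nmtsJob m (.inl p)) = xyLength sX sY P p := by
  rcases p with k | k <;> simp [osB, xyLength]
  omega

@[simp] theorem osB_nmtsJob_inr (i : Fin m) : osB m sX sY P (nmtsJob m (.inr i)) = 2 := by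
  simp [osB]
  omega

theorem sum_xyLength : ∑ p, xyLength sX sY P p = ∑ i, sX i + ∑ i, sY i + 3 * m * P := by
  simp [xyLength, Fintype.sum_sum_type, sum_add_distrib]
  ring

theorem sum_osA : ∑ j, osA m t P j = 2 * m + 3 * m * P + ∑ i, t i := by
  rw [← (nmtsJob m).sum_comp]
  simp [Fintype.sum_sum_type, sum_add_distrib]
  ring

theorem sum_osB : ∑ j, osB m sX sY P j = 2 * m + 3 * m * P + ∑ i, sX i + ∑ i, sY i := by
  rw [← (nmtsJob m).sum_comp, Fintype.sum_sum_type]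
  simp only [osB_nmtsJob_inl, osB_nmtsJob_inr, sum_xyLength, sum_const, card_univ,
    Fintype.card_fin, smul_eq_mul]
  ring

theorem osB_le (hP : 1 ≤ P) (j : Fin (3 * m)) :
    osB m sX sY P j ≤ ∑ i, sX i + ∑ i, sY i + 2 * P := by
  obtain ⟨(k | k) | i, rfl⟩ := (nmtsJob m).surjective j
  · have := single_le_sum (fun i _ => Nat.zero_le (sX i)) (mem_univ k)
    simp only [osB_nmtsJob_inl, xyLength, Sum.elim_inl]
    omega
  · have := single_le_sum (fun i _ => Nat.zero_le (sY i)) (mem_univ k)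
    simp only [osB_nmtsJob_inl, xyLength, Sum.elim_inr]
    omega
  · rw [osB_nmtsJob_inr]
    omega

theorem exists_injective_eq_nmtsJob_inl {G : Fin m ⊕ Fin m → Fin (3 * m)}
    (hG : Function.Injective G) (hP : 1 ≤ P)
    (hlong : ∀ i, ∑ i, sX i + ∑ i, sY i + 2 * P + 2 <
      osB m sX sY P (G (.inl i)) + osB m sX sY P (G (.inr i))) :
    ∃ F : Fin m ⊕ Fin m → Fin m ⊕ Fin m, Function.Injective F ∧
      ∀ p, G p = nmtsJob m (.inl (F p)) := by
  have hxy : ∀ p, ∃ q, G p = nmtsJob m (.inl q) := by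
    intro p
    obtain ⟨q | i, hq⟩ := (nmtsJob m).surjective (G p)
    · exact ⟨q, hq.symm⟩
    · have h2 : osB m sX sY P (G p) = 2 := by rw [← hq, osB_nmtsJob_inr]
      have hb := osB_le (sX := sX) (sY := sY) hP
      rcases p with i' | i'
      · have := hb (G (.inr i')); have := hlong i'; omega
      · have := hb (G (.inl i')); have := hlong i'; omega
  choose F hF using hxy
  exact ⟨F, fun p q h => hG (by rw [hF, hF, h]), hF⟩

theorem exists_nmts_solution_of_pairing (hsum : ∑ i, t i = ∑ i, sX i + ∑ i, sY i)
    (hP : ∑ i, t i < P) {F : Fin m ⊕ Fin m → Fin m ⊕ Fin m} (hF : Function.Injective F)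
    (hF_le : ∀ i, t i + 3 * P ≤ xyLength sX sY P (F (.inl i)) + xyLength sX sY P (F (.inr i))) :
    ∃ α β : Fin m ≃ Fin m, ∀ i, sX (α i) + sY (β i) = t i := by
  have hF_eq : ∀ i,
      t i + 3 * P = xyLength sX sY P (F (.inl i)) + xyLength sX sY P (F (.inr i)) := by
    refine fun i => (sum_eq_sum_iff_of_le fun i _ => hF_le i).mp ?_ i (mem_univ i)
    refine le_antisymm (sum_le_sum fun i _ => hF_le i) (le_of_eq ?_)
    calc ∑ i, (xyLength sX sY P (F (.inl i)) + xyLength sX sY P (F (.inr i)))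
        = ∑ p, xyLength sX sY P (F p) := by rw [Fintype.sum_sum_type, sum_add_distrib]
      _ = ∑ p, xyLength sX sY P p := (Finite.injective_iff_bijective.mp hF).sum_comp _
      _ = ∑ i, (t i + 3 * P) := by rw [sum_xyLength, sum_add_distrib, ← hsum]; simp; ring
  -- `t i`, `sX k + sX k'` and `sY k + sY k'` are all `< P`: matching multiples of `P` forces
  -- one x-job and one y-job.
  have hsplit : ∀ i, ∃ k k', (F (.inl i) = .inl k ∧ F (.inr i) = .inr k' ∨
      F (.inl i) = .inr k' ∧ F (.inr i) = .inl k) ∧ t i = sX k + sY k' := by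
    intro i
    have hne : F (.inl i) ≠ F (.inr i) := hF.ne Sum.inl_ne_inr
    have hti : t i ≤ ∑ i, t i := single_le_sum (fun _ _ => Nat.zero_le _) (mem_univ i)
    have hFi := hF_eq i
    rcases hl : F (.inl i) with k | k <;> rcases hr : F (.inr i) with k' | k' <;>
      rw [hl, hr] at hne hFi <;> simp only [xyLength, Sum.elim_inl, Sum.elim_inr] at hFi
    · have := add_le_sum (f := sX) (fun _ _ => Nat.zero_le _) (mem_univ k) (mem_univ k')
        (fun h => hne (congrArg _ h))
      omega
    · exact ⟨k, k', .inl ⟨rfl, rfl⟩, by omega⟩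
    · exact ⟨k', k, .inr ⟨rfl, rfl⟩, by omega⟩
    · omega
  choose x y hxy ht using hsplit
  have hx : Function.Injective x := by
    intro i i' h
    rcases hxy i with ⟨h1, -⟩ | ⟨-, h1⟩ <;> rcases hxy i' with ⟨h2, -⟩ | ⟨-, h2⟩ <;>
      rw [h, ← h2] at h1 <;> simpa using hF h1
  have hy : Function.Injective y := by
    intro i i' h
    rcases hxy i with ⟨-, h1⟩ | ⟨h1, -⟩ <;> rcases hxy i' with ⟨-, h2⟩ | ⟨h2, -⟩ <;>
      rw [h, ← h2] at h1 <;> simpa using hF h1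
  exact ⟨.ofBijective x (Finite.injective_iff_bijective.mp hx),
    .ofBijective y (Finite.injective_iff_bijective.mp hy), fun i => (ht i).symm⟩

end Reduction

/-- if the constructed two-machine open shop instance has a feasible
no-idle/no-wait schedule with makespan at most `L + 1`, the NMTS instance
`(sX, sY, t)` has a solution. -/
theorem stmt_18 (m : ℕ) (hm : 1 ≤ m) (sX sY t : Fin m → ℕ)
    (hsX : ∀ i, 0 < sX i) (hsY : ∀ i, 0 < sY i) (ht : ∀ i, 0 < t i)
    (hsum : ∑ i, t i = ∑ i, sX i + ∑ i, sY i)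
    (P L : ℕ) (hP : P = ∑ i, t i + ∑ i, sX i + ∑ i, sY i)
    (hL : L = 2 * m + 3 * m * P + ∑ i, t i)
    (hsched : ∃ (π1 π2 : Fin (3 * m) ≃ Fin (3 * m)) (s1 s2 : ℕ),
      OSSchedule (3 * m) (osA m t P) (osB m sX sY P) π1 π2 s1 s2 ∧
      max (s1 + ∑ j, osA m t P j) (s2 + ∑ j, osB m sX sY P j) ≤ L + 1) :
    ∃ α β : Fin m ≃ Fin m, ∀ i, sX (α i) + sY (β i) = t i := by
  obtain ⟨π1, π2, s1, s2, hS, hmk⟩ := hsched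
  rw [sum_osA, sum_osB, max_le_iff] at hmk
  have hQ : 2 ≤ ∑ i, sX i + ∑ i, sY i := by
    have := single_le_sum (fun i _ => Nat.zero_le (sX i)) (mem_univ ⟨0, hm⟩)
    have := single_le_sum (fun i _ => Nat.zero_le (sY i)) (mem_univ ⟨0, hm⟩)
    have := hsX ⟨0, hm⟩; have := hsY ⟨0, hm⟩
    omega
  have hb := osB_le (sX := sX) (sY := sY) (P := P) (by omega)
  obtain ⟨G, hG, hcover⟩ := hS.exists_injective_flanking
    (T := fun i => nmtsJob m (.inr i)) ((nmtsJob m).injective.comp Sum.inr_injective)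
    (fun i j => by have := hb j; have := ht i; rw [osA_nmtsJob_inr]; omega)
    (by omega) (by rw [sum_osA, sum_osB]; omega)
  simp only [osA_nmtsJob_inr] at hcover
  obtain ⟨F, hF, hGF⟩ := exists_injective_eq_nmtsJob_inl (sX := sX) (sY := sY) (P := P) hG
    (by omega) fun i => by have := hcover i; have := ht i; omega
  refine exists_nmts_solution_of_pairing (P := P) hsum (by omega) hF fun i => ?_
  simpa only [hGF, osB_nmtsJob_inl] using hcover i
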